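/- Linearity of ξ₀ along admissible segments: with q, τ, and admissible B^Q_τ(q) as above, for p ∈ B^Q_τ(q) and s ∈ [0,1] define p(s) := ∑_j ⟦ s·q_{κ_j} + (1−s)·p_j^{κ_j} ⟧ using the unique pairing κ. Then ξ₀(p(s)) = s·ξ₀(q) + (1−s)·ξ₀(p). In particular |ξ₀(q) − ξ₀(p)| = G(p,q) for all p in the admissible ball. -/

import Mathlib

/-!
Admissibility means that, in every coordinate, the `τ`-neighbourhoods of the distinct support
points of `q` are disjoint intervals. A point of `p` paired with `q_i` lies in the `i`-th one, so
in each coordinate the order of the `p`-values forces the order of the paired `q`-values, and one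
permutation sorts the `α`-coordinates of `p`, of `q` and of every convex combination `p(s)`
simultaneously; sorting is then linear along the segment. The same disjointness makes `q_{κ j}`
the nearest support point to `p_j`, so the pairing `κ` realises `G(p,q)`, and summing the
coordinatewise squares under the common sorting permutation gives `|ξ₀(q) − ξ₀(p)| = G(p,q)`.
-/

open Finset

/-- The Almgren metric on unordered `Q`-tuples in `ℝⁿ`. -/
noncomputable def Gdist {n Q : ℕ} (p q : Fin Q → EuclideanSpace ℝ (Fin n)) : ℝ :=
  Finset.univ.inf' Finset.univ_nonempty
    (fun σ : Equiv.Perm (Fin Q) => Real.sqrt (∑ i, ‖p i - q (σ i)‖ ^ 2))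

/-- The sorting map for tuples of reals. -/
noncomputable def ξsort {Q : ℕ} (p : Fin Q → ℝ) : Fin Q → ℝ := p ∘ Tuple.sort p

section Sorting

variable {Q : ℕ} {f g : Fin Q → ℝ}

lemma ξsort_eq_comp_sort_of_le_imp_le (h : ∀ j k, f j ≤ f k → g j ≤ g k) :
    ξsort g = g ∘ Tuple.sort f :=
  (Tuple.comp_sort_eq_comp_iff_monotone.mpr
    fun _ _ hab => h _ _ (Tuple.monotone_sort f hab)).symm

lemma ξsort_mul_add_one_sub_mul (h : ∀ j k, f j ≤ f k → g j ≤ g k) {s : ℝ}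
    (hs : s ∈ Set.Icc (0 : ℝ) 1) (i : Fin Q) :
    ξsort (fun j => s * g j + (1 - s) * f j) i = s * ξsort g i + (1 - s) * ξsort f i := by
  have hcomb : ∀ j k, f j ≤ f k → s * g j + (1 - s) * f j ≤ s * g k + (1 - s) * f k :=
    fun j k hjk => add_le_add (mul_le_mul_of_nonneg_left (h j k hjk) hs.1)
      (mul_le_mul_of_nonneg_left hjk (sub_nonneg.mpr hs.2))
  rw [ξsort_eq_comp_sort_of_le_imp_le hcomb, ξsort_eq_comp_sort_of_le_imp_le h]
  rfl

lemma sum_sq_sub_ξsort (h : ∀ j k, f j ≤ f k → g j ≤ g k) :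
    ∑ i, (ξsort g i - ξsort f i) ^ 2 = ∑ j, (f j - g j) ^ 2 := by
  rw [ξsort_eq_comp_sort_of_le_imp_le h, ← Equiv.sum_comp (Tuple.sort f) fun j => (f j - g j) ^ 2]
  exact Finset.sum_congr rfl fun i _ => by simp only [ξsort, Function.comp_apply]; ring

end Sorting

section Separation

variable {a b x y τ : ℝ}

lemma le_of_disjoint_Icc_of_le (hd : Disjoint (Set.Icc (a - τ) (a + τ)) (Set.Icc (b - τ) (b + τ)))
    (hx : |x - a| ≤ τ) (hy : |y - b| ≤ τ) (hxy : x ≤ y) : a ≤ b := by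
  by_contra! hba
  obtain ⟨hx₁, -⟩ := abs_le.mp hx
  obtain ⟨hy₁, hy₂⟩ := abs_le.mp hy
  exact Set.disjoint_left.mp hd (show y ∈ Set.Icc (a - τ) (a + τ) from ⟨by linarith, by linarith⟩)
    ⟨by linarith, by linarith⟩

lemma lt_abs_sub_of_disjoint_Icc
    (hd : Disjoint (Set.Icc (a - τ) (a + τ)) (Set.Icc (b - τ) (b + τ))) (hx : |x - a| ≤ τ) :
    τ < |x - b| := by
  by_contra! hxb
  obtain ⟨hx₁, hx₂⟩ := abs_le.mp hx
  obtain ⟨hb₁, hb₂⟩ := abs_le.mp hxb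
  exact Set.disjoint_left.mp hd (show x ∈ Set.Icc (a - τ) (a + τ) from ⟨by linarith, by linarith⟩)
    ⟨by linarith, by linarith⟩

end Separation

section Euclidean

variable {n Q I : ℕ}

lemma abs_sub_apply_le_norm_sub (x y : EuclideanSpace ℝ (Fin n)) (α : Fin n) :
    |x α - y α| ≤ ‖x - y‖ := by
  simpa only [dist_eq_norm, Real.norm_eq_abs] using PiLp.dist_apply_le x y α

lemma Gdist_eq_of_forall_norm_sub_le {p q : Fin Q → EuclideanSpace ℝ (Fin n)}
    (h : ∀ i k, ‖p i - q i‖ ≤ ‖p i - q k‖) :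
    Gdist p q = Real.sqrt (∑ i, ‖p i - q i‖ ^ 2) :=
  le_antisymm (Finset.inf'_le _ (Finset.mem_univ 1))
    (Finset.le_inf' _ _ fun σ _ => Real.sqrt_le_sqrt <| Finset.sum_le_sum fun i _ =>
      pow_le_pow_left₀ (norm_nonneg _) (h i (σ i)) 2)

lemma sum_sum_sq_sub_ξsort {p q : Fin Q → EuclideanSpace ℝ (Fin n)}
    (h : ∀ α j k, p j α ≤ p k α → q j α ≤ q k α) :
    ∑ α, ∑ i, (ξsort (fun j => q j α) i - ξsort (fun j => p j α) i) ^ 2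
      = ∑ j, ‖p j - q j‖ ^ 2 := by
  simp only [sum_sq_sub_ξsort (h _), EuclideanSpace.norm_sq_eq, PiLp.sub_apply,
    Real.norm_eq_abs, sq_abs]
  exact Finset.sum_comm

variable {qi : Fin I → EuclideanSpace ℝ (Fin n)} {τ : ℝ}
  (hadm : ∀ (α : Fin n) (i j : Fin I), i ≠ j →
    Disjoint (Set.Icc (qi i α - τ) (qi i α + τ)) (Set.Icc (qi j α - τ) (qi j α + τ)))
include hadm

lemma apply_le_apply_of_admissible {x y : EuclideanSpace ℝ (Fin n)} {i k : Fin I}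
    (hx : ‖x - qi i‖ ≤ τ) (hy : ‖y - qi k‖ ≤ τ) {α : Fin n} (hxy : x α ≤ y α) :
    qi i α ≤ qi k α := by
  obtain rfl | hik := eq_or_ne i k
  · exact le_rfl
  exact le_of_disjoint_Icc_of_le (hadm α i k hik) ((abs_sub_apply_le_norm_sub _ _ α).trans hx)
    ((abs_sub_apply_le_norm_sub _ _ α).trans hy) hxy

lemma norm_sub_le_norm_sub_of_admissible {x : EuclideanSpace ℝ (Fin n)} {i : Fin I}
    (hx : ‖x - qi i‖ ≤ τ) (k : Fin I) : ‖x - qi i‖ ≤ ‖x - qi k‖ := by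
  obtain rfl | hik := eq_or_ne i k
  · exact le_rfl
  cases isEmpty_or_nonempty (Fin n) with
  | inl _ => simp only [Subsingleton.elim (x - qi i) 0, norm_zero, norm_nonneg]
  | inr hn =>
    obtain ⟨α⟩ := hn
    calc ‖x - qi i‖ ≤ τ := hx
      _ ≤ |x α - qi k α| := (lt_abs_sub_of_disjoint_Icc (hadm α i k hik)
          ((abs_sub_apply_le_norm_sub _ _ α).trans hx)).le
      _ ≤ ‖x - qi k‖ := abs_sub_apply_le_norm_sub _ _ α

end Euclidean

theorem stmt_10_general (n Q I : ℕ) (qi : Fin I → EuclideanSpace ℝ (Fin n))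
    (τ : ℝ)
    (hadm : ∀ (α : Fin n) (i j : Fin I), i ≠ j →
      Disjoint (Set.Icc (qi i α - τ) (qi i α + τ)) (Set.Icc (qi j α - τ) (qi j α + τ)))
    (κ : Fin Q → Fin I) (p : Fin Q → EuclideanSpace ℝ (Fin n))
    (hpair : ∀ j, ‖p j - qi (κ j)‖ ≤ τ)
    (s : ℝ) (hs : s ∈ Set.Icc (0 : ℝ) 1) :
    (∀ (α : Fin n) (i : Fin Q),
      ξsort (fun j => (s • qi (κ j) + (1 - s) • p j : EuclideanSpace ℝ (Fin n)) α) i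
        = s * ξsort (fun j => qi (κ j) α) i + (1 - s) * ξsort (fun j => p j α) i) ∧
    Real.sqrt (∑ α : Fin n, ∑ i : Fin Q,
        (ξsort (fun j => qi (κ j) α) i - ξsort (fun j => p j α) i) ^ 2)
      = Gdist p (fun j => qi (κ j)) := by
  have hcomono : ∀ α j k, p j α ≤ p k α → qi (κ j) α ≤ qi (κ k) α :=
    fun _ j k => apply_le_apply_of_admissible hadm (hpair j) (hpair k)
  refine ⟨fun α i => ξsort_mul_add_one_sub_mul (hcomono α) hs i, ?_⟩
  rw [sum_sum_sq_sub_ξsort hcomono, Gdist_eq_of_forall_norm_sub_le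
    fun j k => norm_sub_le_norm_sub_of_admissible hadm (hpair j) (κ k)]

/-- Linearity of `ξ₀` along admissible segments: if `B^Q_τ(q)` is admissible,
`p ∈ B^Q_τ(q)` with pairing `κ`, and `p(s) := ∑_j ⟦s·q_{κ j} + (1−s)·p_j⟧` for
`s ∈ [0,1]`, then `ξ₀(p(s)) = s·ξ₀(q) + (1−s)·ξ₀(p)` (coordinatewise for each sorted
coordinate vector); in particular `|ξ₀(q) − ξ₀(p)| = G(p,q)`. -/
theorem stmt_10 (n Q I : ℕ) (qi : Fin I → EuclideanSpace ℝ (Fin n))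
    (hinj : Function.Injective qi) (τ : ℝ) (hτ : 0 < τ)
    (hadm : ∀ (α : Fin n) (i j : Fin I), i ≠ j →
      Disjoint (Set.Icc (qi i α - τ) (qi i α + τ)) (Set.Icc (qi j α - τ) (qi j α + τ)))
    (κ : Fin Q → Fin I) (p : Fin Q → EuclideanSpace ℝ (Fin n))
    (hpair : ∀ j, ‖p j - qi (κ j)‖ ≤ τ)
    (s : ℝ) (hs : s ∈ Set.Icc (0 : ℝ) 1) :
    (∀ (α : Fin n) (i : Fin Q),
      ξsort (fun j => (s • qi (κ j) + (1 - s) • p j : EuclideanSpace ℝ (Fin n)) α) i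
        = s * ξsort (fun j => qi (κ j) α) i + (1 - s) * ξsort (fun j => p j α) i) ∧
    Real.sqrt (∑ α : Fin n, ∑ i : Fin Q,
        (ξsort (fun j => qi (κ j) α) i - ξsort (fun j => p j α) i) ^ 2)
      = Gdist p (fun j => qi (κ j)) :=
  stmt_10_general n Q I qi τ hadm κ p hpair s hs
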